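/- Let A be a field. Let g₀ be a formal Laurent series in u with coefficients in A (i.e. with only finitely many nonzero coefficients in negative degrees) and let g∞ be a formal Laurent series in u⁻¹ with coefficients in A (i.e. with only finitely many nonzero coefficients in positive degrees). Suppose there are finitely many pairwise distinct nonzero elements a₁, …, a_r ∈ A, multiplicities n₁, …, n_r ≥ 1, and coefficients c_{i,ν} ∈ A for 0 ≤ ν ≤ nᵢ − 1, such that for every n ∈ ℤ the coefficient of uⁿ in g₀ minus the coefficient of uⁿ in g∞ equals Σ_{i=1}^{r} Σ_{ν=0}^{nᵢ−1} c_{i,ν} · (coefficient of uⁿ in δ^{(ν)}(u/aᵢ)). Then there exists a rational function g ∈ A(u) such that: (1) g · Π_{i=1}^{r}(u − aᵢ)^{nᵢ} is a Laurent polynomial in u (so the divisor of poles of g away from 0 and ∞ is bounded by Σ nᵢ·(aᵢ)); (2) the Laurent-series expansion of g at u = 0 equals g₀; and (3) the expansion of g at u = ∞, as a formal series in u⁻¹, equals g∞. -/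

import Mathlib

open scoped LaurentSeries Polynomial

/-- The coefficient of `uⁿ` in the `ν`-th formal derivative of the delta function
`δ(u/a) = Σ_{m∈ℤ} (u/a)^m`, namely `a^{-(n+ν)} · (n+ν)(n+ν-1)⋯(n+1)`. -/
noncomputable def deltaDerivCoeff {A : Type} [Field A] (a : A) (ν : ℕ) (n : ℤ) : A :=
  a ^ (-(n + (ν : ℤ))) * ∏ j ∈ Finset.range ν, ((n : A) + (j : A) + 1)

/-!
Take `g = H + P` with `H = Σ c_{i,ν} ν! aᵢ (aᵢ - u)^{-(ν+1)}` and `P` a Laurent polynomial.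
For `T = (a - u)^{-(ν+1)}` the expansion at `0` is `Σ_{n ≥ 0} a^{-(n+ν+1)} C(n+ν, ν) uⁿ` and
the expansion at `∞` is `-Σ_{n ≤ -ν-1} a^{-(n+ν+1)} (-1)^ν C(-n-1, ν) uⁿ`; their difference is
`a^{-(n+ν+1)}` times the binomial coefficient `C(n+ν, ν)` of the binomial ring `ℤ`, and
`ν! · C(n+ν, ν) = (n+ν)⋯(n+1)`. Hence `H` has the same "expansion at 0 minus expansion at ∞"
as `g₀ - g∞`, so `d = g₀ - (H at 0) = g∞ - (H at ∞)` is bounded below and above: it is the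
coefficient sequence of a Laurent polynomial `P`.
-/

open scoped PowerSeries Nat

theorem LaurentSeries.coeff_coe_powerSeries_of_neg {R : Type*} [Semiring R] (f : R⟦X⟧) {n : ℤ}
    (hn : n < 0) : HahnSeries.coeff (f : R⸨X⸩) n = 0 := by
  rw [HahnSeries.ofPowerSeries_apply, HahnSeries.embDomain_of_notMem_range]
  rintro ⟨k, rfl⟩
  exact (Int.natCast_nonneg k).not_gt hn

theorem PowerSeries.C_sub_X_pow_mul_mk_eq_one {A : Type} [Field A] {a : A} (ha : a ≠ 0) (d : ℕ) :
    (C a - X) ^ (d + 1) * mk (fun n => a⁻¹ ^ (n + d + 1) * ((n + d).choose d : A)) = 1 := by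
  have hsub : C a - X = C a * rescale a⁻¹ (1 - X) := by
    rw [map_sub, map_one, rescale_X, mul_sub, mul_one, ← mul_assoc, ← map_mul, mul_inv_cancel₀ ha,
      map_one, one_mul]
  have hmk : mk (fun n => a⁻¹ ^ (n + d + 1) * ((n + d).choose d : A)) =
      C (a⁻¹ ^ (d + 1)) * rescale a⁻¹ (invOneSubPow A (d + 1)).val := by
    ext n
    rw [invOneSubPow_val_succ_eq_mk_add_choose, coeff_C_mul, coeff_rescale, coeff_mk, coeff_mk,
      add_comm d n]
    ring
  have hinv : (1 - X : A⟦X⟧) ^ (d + 1) * (invOneSubPow A (d + 1)).val = 1 := by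
    rw [← invOneSubPow_inv_eq_one_sub_pow]
    exact (invOneSubPow A (d + 1)).inv_val
  calc (C a - X) ^ (d + 1) * mk (fun n => a⁻¹ ^ (n + d + 1) * ((n + d).choose d : A))
      = C ((a * a⁻¹) ^ (d + 1)) *
          rescale a⁻¹ ((1 - X) ^ (d + 1) * (invOneSubPow A (d + 1)).val) := by
        rw [hsub, hmk]
        simp only [map_mul, map_pow, mul_pow]
        ring
    _ = 1 := by rw [hinv, mul_inv_cancel₀ ha, one_pow, map_one, map_one, one_mul]

theorem Int.prod_range_add_one_eq_factorial_mul_choose (n : ℤ) (ν : ℕ) :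
    ∏ j ∈ Finset.range ν, (n + j + 1) = ν ! * Ring.choose (n + ν) ν := by
  rw [← nsmul_eq_mul, ← Ring.descPochhammer_eq_factorial_smul_choose, ← Polynomial.eval_eq_smeval,
    descPochhammer_eval_eq_prod_range, ← Finset.prod_range_reflect]
  refine Finset.prod_congr rfl fun j hj => ?_
  have hj : ((ν - 1 - j : ℕ) : ℤ) = ν - 1 - j := by rw [Finset.mem_range] at hj; omega
  rw [hj]
  ring

theorem Ring.choose_neg_natCast_sub_one (k ν : ℕ) :
    Ring.choose (-(k + 1 : ℤ)) ν = (-1) ^ ν * ((k + ν).choose ν : ℤ) := by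
  rw [Ring.choose_neg, show ((k : ℤ) + 1 + ν - 1) = ((k + ν : ℕ) : ℤ) by push_cast; ring,
    Ring.choose_natCast, Units.smul_def, Int.coe_negOnePow_natCast, smul_eq_mul]

namespace RatFunc

variable {A : Type} [Field A]

theorem coe_C (c : A) : ((C c : RatFunc A) : A⸨X⸩) = HahnSeries.C c := by
  rw [← algebraMap_C, ← IsScalarTower.algebraMap_apply]
  simp

theorem coe_C_mul_X_zpow (c : A) (t : ℤ) :
    ((C c * X ^ t : RatFunc A) : A⸨X⸩) = HahnSeries.single t c := by
  rw [map_mul, map_zpow₀, coe_X, coe_C, ← single_zpow, HahnSeries.C_apply,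
    HahnSeries.single_mul_single, zero_add, mul_one]

theorem coeff_coe_sum_C_mul_X_zpow (s : Finset ℤ) (d : ℤ → A) (n : ℤ) :
    ((∑ k ∈ s, C (d k) * X ^ k : RatFunc A) : A⸨X⸩).coeff n = if n ∈ s then d n else 0 := by
  simp only [map_sum, coe_C_mul_X_zpow, HahnSeries.coeff_sum, HahnSeries.coeff_single]
  convert Finset.sum_ite_eq s n d

theorem coe_inv_C_sub_X_pow {a : A} (ha : a ≠ 0) (d : ℕ) :
    ((((C a - X) ^ (d + 1))⁻¹ : RatFunc A) : A⸨X⸩) =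
      ((PowerSeries.mk fun n => a⁻¹ ^ (n + d + 1) * ((n + d).choose d : A) : A⟦X⟧) : A⸨X⸩) := by
  have hsub : ((C a - X : RatFunc A) : A⸨X⸩) =
      ((PowerSeries.C a - PowerSeries.X : A⟦X⟧) : A⸨X⸩) := by
    rw [map_sub, coe_C, coe_X, map_sub, HahnSeries.ofPowerSeries_C, HahnSeries.ofPowerSeries_X]
  rw [map_inv₀, map_pow, hsub, ← map_pow]
  refine inv_eq_of_mul_eq_one_right ?_
  rw [← map_mul, PowerSeries.C_sub_X_pow_mul_mk_eq_one ha, map_one]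

theorem transcendental_X_inv : Transcendental A (X⁻¹ : RatFunc A) :=
  fun h => transcendental_X (IsAlgebraic.inv_iff.mp h)

noncomputable def substXInv : RatFunc A →ₐ[A] RatFunc A :=
  liftAlgHom (Polynomial.aeval X⁻¹) (nonZeroDivisors_le_comap_nonZeroDivisors_of_injective _
    (transcendental_iff_injective.mp transcendental_X_inv))

theorem eval_X_inv_eq_substXInv (g : RatFunc A) :
    eval (algebraMap A (RatFunc A)) X⁻¹ g = substXInv g := by
  rw [substXInv, liftAlgHom_apply, eval, Polynomial.aeval_def, Polynomial.aeval_def]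

theorem substXInv_algebraMap (p : A[X]) :
    substXInv (algebraMap A[X] (RatFunc A) p) = Polynomial.aeval X⁻¹ p := by
  simpa [substXInv] using liftAlgHom_apply_div (Polynomial.aeval (X⁻¹ : RatFunc A)) _ p 1

@[simp] theorem substXInv_X : substXInv (X : RatFunc A) = X⁻¹ := by
  simpa using substXInv_algebraMap (A := A) Polynomial.X

@[simp] theorem substXInv_C (c : A) : substXInv (C c : RatFunc A) = C c := by
  rw [← algebraMap_eq_C, AlgHom.commutes]

theorem coeff_coe_substXInv_sum_C_mul_X_zpow (s : Finset ℤ) (d : ℤ → A) (n : ℤ) :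
    (substXInv (∑ k ∈ s, C (d k) * X ^ k : RatFunc A) : A⸨X⸩).coeff n =
      if -n ∈ s then d (-n) else 0 := by
  have hsubst : substXInv (∑ k ∈ s, C (d k) * X ^ k : RatFunc A) =
      ∑ k ∈ s.map (Equiv.neg ℤ).toEmbedding, C (d (-k)) * X ^ k := by
    simp [Finset.sum_map, map_zpow₀, inv_zpow']
  rw [hsubst, coeff_coe_sum_C_mul_X_zpow]
  simp only [Finset.mem_map_equiv, Equiv.neg_symm, Equiv.neg_apply]

theorem C_sub_X_inv {a : A} (ha : a ≠ 0) :
    C a - X⁻¹ = C (-a) * X⁻¹ * (C a⁻¹ - X) := by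
  have hX : (X : RatFunc A)⁻¹ * X = 1 := inv_mul_cancel₀ X_ne_zero
  have hC : C a * C a⁻¹ = 1 := by rw [← map_mul, mul_inv_cancel₀ ha, map_one]
  rw [map_neg]
  linear_combination X⁻¹ * hC - C a * hX

theorem substXInv_inv_C_sub_X_pow {a : A} (ha : a ≠ 0) (d : ℕ) :
    substXInv (((C a - X) ^ (d + 1))⁻¹ : RatFunc A) =
      C ((-a)⁻¹ ^ (d + 1)) * X ^ ((d + 1 : ℕ) : ℤ) * ((C a⁻¹ - X) ^ (d + 1))⁻¹ := by
  rw [map_inv₀, map_pow, map_sub, substXInv_C, substXInv_X, C_sub_X_inv ha, mul_pow, mul_pow,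
    mul_inv, mul_inv, inv_pow, inv_inv, zpow_natCast, ← map_pow, ← map_inv₀, inv_pow]

theorem coeff_coe_substXInv_inv_C_sub_X_pow {a : A} (ha : a ≠ 0) (d : ℕ) (n : ℤ) :
    (substXInv (((C a - X) ^ (d + 1))⁻¹ : RatFunc A) : A⸨X⸩).coeff n =
      (-a)⁻¹ ^ (d + 1) * ((((C a⁻¹ - X) ^ (d + 1))⁻¹ : RatFunc A) : A⸨X⸩).coeff (n - (d + 1)) := by
  rw [substXInv_inv_C_sub_X_pow ha, map_mul, coe_C_mul_X_zpow, ← HahnSeries.coeff_single_mul_add]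
  congr 1
  push_cast
  ring

variable (A) in
def laurentSubalgebra : Subalgebra A (RatFunc A) where
  carrier := {f | ∃ (p : A[X]) (m : ℕ), f = algebraMap A[X] (RatFunc A) p / X ^ m}
  mul_mem' := by
    rintro _ _ ⟨p, m, rfl⟩ ⟨q, k, rfl⟩
    exact ⟨p * q, m + k, by rw [map_mul, pow_add, div_mul_div_comm]⟩
  add_mem' := by
    rintro _ _ ⟨p, m, rfl⟩ ⟨q, k, rfl⟩
    refine ⟨p * Polynomial.X ^ k + Polynomial.X ^ m * q, m + k, ?_⟩
    rw [div_add_div _ _ (pow_ne_zero _ X_ne_zero) (pow_ne_zero _ X_ne_zero), pow_add]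
    simp
  algebraMap_mem' c := ⟨Polynomial.C c, 0, by simp⟩

theorem algebraMap_mem_laurentSubalgebra (p : A[X]) :
    algebraMap A[X] (RatFunc A) p ∈ laurentSubalgebra A :=
  ⟨p, 0, by simp⟩

theorem C_mem_laurentSubalgebra (c : A) : C c ∈ laurentSubalgebra A :=
  ⟨Polynomial.C c, 0, by simp⟩

theorem X_zpow_mem_laurentSubalgebra (k : ℤ) : (X : RatFunc A) ^ k ∈ laurentSubalgebra A := by
  obtain ⟨m, rfl | rfl⟩ := Int.eq_nat_or_neg k
  · exact ⟨Polynomial.X ^ m, 0, by simp⟩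
  · exact ⟨1, m, by simp⟩

theorem inv_C_sub_X_pow_mul_mem_laurentSubalgebra {a : A} {d : ℕ} {q : A[X]}
    (h : (Polynomial.X - Polynomial.C a) ^ d ∣ q) :
    ((C a - X) ^ d)⁻¹ * algebraMap A[X] (RatFunc A) q ∈ laurentSubalgebra A := by
  obtain ⟨r, rfl⟩ : (Polynomial.C a - Polynomial.X) ^ d ∣ q :=
    (pow_dvd_pow_of_dvd (neg_sub Polynomial.X (Polynomial.C a) ▸ neg_dvd.2 dvd_rfl) d).trans h
  have hne : algebraMap A[X] (RatFunc A) ((Polynomial.C a - Polynomial.X) ^ d) ≠ 0 :=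
    algebraMap_ne_zero (pow_ne_zero _ (sub_ne_zero.2 (Polynomial.X_ne_C a).symm))
  rw [map_mul, ← algebraMap_C, ← algebraMap_X, ← map_sub, ← map_pow, inv_mul_cancel_left₀ hne]
  exact algebraMap_mem_laurentSubalgebra r

/-- The coefficient of `uⁿ` in the expansion of `f` at `0` minus that in its expansion at `∞`. -/
noncomputable def expansionGap (f : RatFunc A) (n : ℤ) : A :=
  (f : A⸨X⸩).coeff n - (substXInv f : A⸨X⸩).coeff (-n)

theorem expansionGap_sum {ι : Type*} (s : Finset ι) (f : ι → RatFunc A) (n : ℤ) :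
    expansionGap (∑ i ∈ s, f i) n = ∑ i ∈ s, expansionGap (f i) n := by
  simp only [expansionGap, map_sum, HahnSeries.coeff_sum, Finset.sum_sub_distrib]

theorem expansionGap_C_mul (c : A) (f : RatFunc A) (n : ℤ) :
    expansionGap (C c * f) n = c * expansionGap f n := by
  simp only [expansionGap, map_mul, substXInv_C, coe_C, HahnSeries.C_mul_eq_smul,
    HahnSeries.coeff_smul, smul_eq_mul, mul_sub]

theorem expansionGap_inv_C_sub_X_pow {a : A} (ha : a ≠ 0) (d : ℕ) (n : ℤ) :
    expansionGap (((C a - X) ^ (d + 1))⁻¹ : RatFunc A) n =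
      a ^ (-(n + d + 1)) * ((Ring.choose (n + d) d : ℤ) : A) := by
  rw [expansionGap, coeff_coe_substXInv_inv_C_sub_X_pow ha, coe_inv_C_sub_X_pow ha,
    coe_inv_C_sub_X_pow (inv_ne_zero ha)]
  rcases le_or_gt 0 n with hn | hn
  · lift n to ℕ using hn
    rw [LaurentSeries.coeff_coe_powerSeries,
      LaurentSeries.coeff_coe_powerSeries_of_neg _ (by omega), PowerSeries.coeff_mk, mul_zero,
      sub_zero, ← Nat.cast_add, Ring.choose_natCast, ← Nat.cast_add_one, zpow_neg, zpow_natCast,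
      inv_pow]
    push_cast
    rfl
  rw [LaurentSeries.coeff_coe_powerSeries_of_neg _ hn, zero_sub]
  rcases lt_or_ge (-n - (d + 1)) 0 with hk | hk
  · lift n + d to ℕ using (by omega) with e he
    rw [LaurentSeries.coeff_coe_powerSeries_of_neg _ hk, Ring.choose_natCast,
      Nat.choose_eq_zero_of_lt (by omega)]
    simp
  · lift -n - (d + 1) to ℕ using hk with k hkn
    rw [LaurentSeries.coeff_coe_powerSeries, PowerSeries.coeff_mk,
      show n + d = -(k + 1 : ℤ) by omega, Ring.choose_neg_natCast_sub_one,
      show -(-(k + 1 : ℤ) + 1) = k by ring, zpow_natCast]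
    push_cast
    rw [inv_pow, inv_inv, neg_pow, pow_succ (-1 : A) d]
    field_simp
    rw [← pow_mul, pow_mul', neg_one_sq, one_pow]
    ring

theorem exists_add_mem_laurentSubalgebra_expansions (H : RatFunc A) {g₀ gInf : ℤ → A}
    (h₀ : ∃ N : ℤ, ∀ n : ℤ, n < N → g₀ n = 0) (hInf : ∃ N : ℤ, ∀ n : ℤ, N < n → gInf n = 0)
    (hgap : ∀ n, g₀ n - gInf n = expansionGap H n) :
    ∃ P ∈ laurentSubalgebra A, (∀ n, ((H + P : RatFunc A) : A⸨X⸩).coeff n = g₀ n) ∧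
      ∀ n, (substXInv (H + P) : A⸨X⸩).coeff n = gInf (-n) := by
  obtain ⟨N₀, hN₀⟩ := h₀
  obtain ⟨N₁, hN₁⟩ := hInf
  obtain ⟨d, hd₀⟩ : ∃ d : ℤ → A, ∀ n, d n = g₀ n - (H : A⸨X⸩).coeff n := ⟨_, fun _ => rfl⟩
  have hdInf : ∀ n, d n = gInf n - (substXInv H : A⸨X⸩).coeff (-n) := fun n => by
    have h := hgap n
    rw [expansionGap] at h
    rw [hd₀]
    linear_combination h
  set s := Finset.Icc (min N₀ (H : A⸨X⸩).order) (max N₁ (-(substXInv H : A⸨X⸩).order))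
  have hs : ∀ n, (if n ∈ s then d n else 0) = d n := by
    intro n
    split_ifs with hn
    · rfl
    rw [Finset.mem_Icc, not_and_or, not_le, not_le, lt_min_iff, max_lt_iff] at hn
    rcases hn with ⟨hn₀, hnH⟩ | ⟨hn₁, hnH⟩
    · rw [hd₀, hN₀ n hn₀, HahnSeries.coeff_eq_zero_of_lt_order hnH, sub_zero]
    · rw [hdInf, hN₁ n hn₁, HahnSeries.coeff_eq_zero_of_lt_order (by omega), sub_zero]
  refine ⟨∑ k ∈ s, C (d k) * X ^ k, Subalgebra.sum_mem _ fun k _ =>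
    Subalgebra.mul_mem _ (C_mem_laurentSubalgebra _) (X_zpow_mem_laurentSubalgebra k),
    fun n => ?_, fun n => ?_⟩
  · rw [map_add, HahnSeries.coeff_add, coeff_coe_sum_C_mul_X_zpow, hs, hd₀]
    ring
  · rw [map_add, map_add, HahnSeries.coeff_add, coeff_coe_substXInv_sum_C_mul_X_zpow, hs, hdInf,
      neg_neg]
    ring

end RatFunc

open RatFunc in
theorem factorial_mul_mul_expansionGap_inv_C_sub_X_pow {A : Type} [Field A] {a : A} (ha : a ≠ 0)
    (ν : ℕ) (n : ℤ) :
    (ν ! * a : A) * expansionGap (((C a - X) ^ (ν + 1))⁻¹ : RatFunc A) n =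
      deltaDerivCoeff a ν n := by
  have hprod := congrArg (Int.cast : ℤ → A) (Int.prod_range_add_one_eq_factorial_mul_choose n ν)
  push_cast at hprod
  rw [expansionGap_inv_C_sub_X_pow ha, deltaDerivCoeff, hprod,
    show -(n + ν) = -(n + ν + 1) + 1 by ring, zpow_add_one₀ ha]
  ring

theorem rational_function_from_delta_difference_general
    (A : Type) [Field A]
    -- the two formal series, given by their coefficient functions
    (g₀ gInf : ℤ → A)
    -- g₀ is a Laurent series in u : finitely many nonzero coefficients in negative degrees
    (h₀ : ∃ N : ℤ, ∀ n : ℤ, n < N → g₀ n = 0)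
    -- gInf is a Laurent series in u⁻¹ : finitely many nonzero coefficients in positive degrees
    (hInf : ∃ N : ℤ, ∀ n : ℤ, N < n → gInf n = 0)
    -- finitely many pairwise distinct nonzero points aᵢ with multiplicities nᵢ ≥ 1
    (r : ℕ) (a : Fin r → A) (ha0 : ∀ i, a i ≠ 0)
    (nmul : Fin r → ℕ)
    (c : Fin r → ℕ → A)
    -- the difference of the two series is the given combination of derivatives of
    -- delta functions at the aᵢ
    (hdelta : ∀ n : ℤ,
      g₀ n - gInf n = ∑ i, ∑ ν ∈ Finset.range (nmul i), c i ν * deltaDerivCoeff (a i) ν n) :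
    ∃ g : RatFunc A,
      -- (1) the divisor of poles of g away from 0 and ∞ is bounded by Σ nᵢ·(aᵢ):
      -- g · Π (u - aᵢ)^{nᵢ} is a Laurent polynomial
      (∃ (p : Polynomial A) (m : ℕ),
        g * ∏ i, (RatFunc.X - RatFunc.C (a i)) ^ nmul i
          = algebraMap (Polynomial A) (RatFunc A) p / RatFunc.X ^ m) ∧
      -- (2) the expansion of g at u = 0 is g₀
      (∀ n : ℤ, (g : LaurentSeries A).coeff n = g₀ n) ∧
      -- (3) the expansion of g at u = ∞ is gInf : expanding g(1/v) at v = 0 and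
      -- negating exponents gives the coefficients of gInf
      (∀ n : ℤ,
        ((RatFunc.eval (algebraMap A (RatFunc A)) (RatFunc.X⁻¹) g : RatFunc A) :
            LaurentSeries A).coeff n = gInf (-n)) := by
  set H : RatFunc A := ∑ i, ∑ ν ∈ Finset.range (nmul i),
    RatFunc.C (c i ν * ν ! * a i) * ((RatFunc.C (a i) - RatFunc.X) ^ (ν + 1))⁻¹
  set Q : A[X] := ∏ i, (Polynomial.X - Polynomial.C (a i)) ^ nmul i
  have hgap : ∀ n, g₀ n - gInf n = H.expansionGap n := fun n => by
    simp only [hdelta, H, RatFunc.expansionGap_sum, RatFunc.expansionGap_C_mul, mul_assoc,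
      factorial_mul_mul_expansionGap_inv_C_sub_X_pow (ha0 _)]
  have hHQ : H * algebraMap A[X] (RatFunc A) Q ∈ RatFunc.laurentSubalgebra A := by
    simp only [H, Finset.sum_mul, mul_assoc]
    refine Subalgebra.sum_mem _ fun i _ => Subalgebra.sum_mem _ fun ν hν =>
      Subalgebra.mul_mem _ (RatFunc.C_mem_laurentSubalgebra _)
        (RatFunc.inv_C_sub_X_pow_mul_mem_laurentSubalgebra ?_)
    exact (pow_dvd_pow _ (Finset.mem_range.1 hν)).trans
      (Finset.dvd_prod_of_mem (fun j => (Polynomial.X - Polynomial.C (a j)) ^ nmul j)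
        (Finset.mem_univ i))
  obtain ⟨P, hP, hexp₀, hexpInf⟩ :=
    RatFunc.exists_add_mem_laurentSubalgebra_expansions H h₀ hInf hgap
  refine ⟨H + P, ?_, hexp₀, fun n => by rw [RatFunc.eval_X_inv_eq_substXInv]; exact hexpInf n⟩
  have hQ : ∏ i, (RatFunc.X - RatFunc.C (a i)) ^ nmul i = algebraMap A[X] (RatFunc A) Q := by
    simp [Q]
  rw [hQ, add_mul]
  exact Subalgebra.add_mem _ hHQ
    (Subalgebra.mul_mem _ hP (RatFunc.algebraMap_mem_laurentSubalgebra Q))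

theorem rational_function_from_delta_difference
    (A : Type) [Field A]
    -- the two formal series, given by their coefficient functions
    (g₀ gInf : ℤ → A)
    -- g₀ is a Laurent series in u : finitely many nonzero coefficients in negative degrees
    (h₀ : ∃ N : ℤ, ∀ n : ℤ, n < N → g₀ n = 0)
    -- gInf is a Laurent series in u⁻¹ : finitely many nonzero coefficients in positive degrees
    (hInf : ∃ N : ℤ, ∀ n : ℤ, N < n → gInf n = 0)
    -- finitely many pairwise distinct nonzero points aᵢ with multiplicities nᵢ ≥ 1
    (r : ℕ) (a : Fin r → A) (ha : Function.Injective a) (ha0 : ∀ i, a i ≠ 0)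
    (nmul : Fin r → ℕ) (hn : ∀ i, 1 ≤ nmul i)
    (c : Fin r → ℕ → A)
    -- the difference of the two series is the given combination of derivatives of
    -- delta functions at the aᵢ
    (hdelta : ∀ n : ℤ,
      g₀ n - gInf n = ∑ i, ∑ ν ∈ Finset.range (nmul i), c i ν * deltaDerivCoeff (a i) ν n) :
    ∃ g : RatFunc A,
      -- (1) the divisor of poles of g away from 0 and ∞ is bounded by Σ nᵢ·(aᵢ):
      -- g · Π (u - aᵢ)^{nᵢ} is a Laurent polynomial
      (∃ (p : Polynomial A) (m : ℕ),
        g * ∏ i, (RatFunc.X - RatFunc.C (a i)) ^ nmul i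
          = algebraMap (Polynomial A) (RatFunc A) p / RatFunc.X ^ m) ∧
      -- (2) the expansion of g at u = 0 is g₀
      (∀ n : ℤ, (g : LaurentSeries A).coeff n = g₀ n) ∧
      -- (3) the expansion of g at u = ∞ is gInf : expanding g(1/v) at v = 0 and
      -- negating exponents gives the coefficients of gInf
      (∀ n : ℤ,
        ((RatFunc.eval (algebraMap A (RatFunc A)) (RatFunc.X⁻¹) g : RatFunc A) :
            LaurentSeries A).coeff n = gInf (-n)) :=
  rational_function_from_delta_difference_general A g₀ gInf h₀ hInf r a ha0 nmul c hdelta
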